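/- Let M ⊆ B(H) with H finite dimensional, and let p ∈ M ⊗ M (with the Φ action Φ_{x⊗y}(T) = xTy) be an idempotent whose image under Φ is an idempotent operator on B(H) projecting onto a subspace S along a complement. Then Ann(S) = (M ⊗ M^op)(1 − p) and Ann(ker Φ_p) = (M ⊗ M^op) p, where Ann(X) = {z : Φ_z(X) = 0}. -/

import Mathlib

/-!
`Φ` is injective: `M ⊗ Mᵐᵒᵖ` embeds into `Mₙ(ℂ) ⊗ Mₙ(ℂ)ᵐᵒᵖ` (everything is flat over `ℂ`),
and the latter is isomorphic to `End(Mₙ(ℂ))` via `x ⊗ y ↦ (T ↦ x T y)`. Hence `z` kills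
`Im Φ_p` iff `Φ_{zp} = 0` iff `zp = 0` iff `z = z(1 - p)`. Since `Ker Φ_p = Im Φ_{1-p}`,
the second identity is the first one applied to the idempotent `1 - p`.
-/

open TensorProduct Matrix MulOpposite

/-- The algebra homomorphism `Φ : M ⊗ M^op → End(B(H))`, `Φ_{x ⊗ y}(T) = x T y`,
for a `*`-subalgebra `M ⊆ B(H)` with `H` finite dimensional. -/
noncomputable def PhiOp {n : Type*} [Fintype n] [DecidableEq n]
    (M : Subalgebra ℂ (Matrix n n ℂ)) :
    (↥M ⊗[ℂ] (↥M)ᵐᵒᵖ) →ₗ[ℂ] Matrix n n ℂ →ₗ[ℂ] Matrix n n ℂ :=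
  TensorProduct.lift
  { toFun := fun x =>
      { toFun := fun y =>
          (LinearMap.mulLeft ℂ (x : Matrix n n ℂ)).comp
            (LinearMap.mulRight ℂ ((unop y : ↥M) : Matrix n n ℂ))
        map_add' := fun y₁ y₂ => by
          ext T
          simp [Matrix.mul_add]
        map_smul' := fun c y => by
          ext T
          simp [Matrix.mul_smul] }
    map_add' := fun x₁ x₂ => by
      ext y T
      simp [Matrix.add_mul]
    map_smul' := fun c x => by
      ext y T
      simp [smul_mul_assoc] }

section Idempotent

variable {A R V F : Type*} [Ring A] [Ring R] [AddCommGroup V] [Module R V]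
  [FunLike F A (Module.End R V)] [RingHomClass F A (Module.End R V)]
  {φ : F} {p : A}

theorem setOf_forall_range_apply_eq_zero (hφ : Function.Injective φ) (hp : IsIdempotentElem p) :
    {z : A | ∀ T ∈ LinearMap.range (φ p), φ z T = 0} = {z | ∃ w, z = w * (1 - p)} := by
  ext z
  constructor
  · intro hz
    have hzp : z * p = 0 := hφ <| by
      ext T
      simpa using hz _ ⟨T, rfl⟩
    exact ⟨z, by rw [mul_sub, mul_one, hzp, sub_zero]⟩
  · rintro ⟨w, rfl⟩ _ ⟨T, rfl⟩
    rw [← Module.End.mul_apply, ← map_mul, mul_assoc, hp.one_sub_mul_self, mul_zero, map_zero]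
    rfl

theorem setOf_forall_ker_apply_eq_zero (hφ : Function.Injective φ) (hp : IsIdempotentElem p) :
    {z : A | ∀ T ∈ LinearMap.ker (φ p), φ z T = 0} = {z | ∃ w, z = w * p} := by
  have hker : LinearMap.ker (φ p) = LinearMap.range (φ (1 - p)) := by
    rw [map_sub, map_one]
    exact LinearMap.IsIdempotentElem.ker_eq_range_one_sub (hp.map φ)
  rw [hker, setOf_forall_range_apply_eq_zero hφ hp.one_sub, sub_sub_cancel]

end Idempotent

theorem AlgHom.mulLeftRight_matrix_injective (R n : Type*) [CommSemiring R] [Fintype n]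
    [DecidableEq n] : Function.Injective (AlgHom.mulLeftRight R (Matrix n n R)) :=
  Function.LeftInverse.injective (g := AlgHom.mulLeftRightMatrix_inv R n) fun z =>
    LinearMap.congr_fun (AlgHom.mulLeftRightMatrix.inv_comp R n) z

noncomputable def Subalgebra.mulLeftRight {K A : Type*} [CommSemiring K] [Semiring A]
    [Algebra K A] (M : Subalgebra K A) : (M ⊗[K] Mᵐᵒᵖ) →ₐ[K] Module.End K A :=
  (AlgHom.mulLeftRight K A).comp (Algebra.TensorProduct.map M.val (AlgHom.op M.val))

theorem Subalgebra.mulLeftRight_injective {K A : Type*} [Field K] [Ring A] [Algebra K A]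
    (hA : Function.Injective (AlgHom.mulLeftRight K A)) (M : Subalgebra K A) :
    Function.Injective M.mulLeftRight :=
  hA.comp <| TensorProduct.map_injective_of_flat_flat _ _ Subtype.val_injective
    (op_injective.comp (Subtype.val_injective.comp unop_injective))

theorem PhiOp_eq_mulLeftRight {n : Type*} [Fintype n] [DecidableEq n]
    (M : Subalgebra ℂ (Matrix n n ℂ)) : PhiOp M = M.mulLeftRight.toLinearMap := by
  refine TensorProduct.ext' fun x y => ?_
  ext T
  simp [PhiOp, Subalgebra.mulLeftRight, mul_assoc]

theorem stmt_14_general {n : Type*} [Fintype n] [DecidableEq n]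
    (M : Subalgebra ℂ (Matrix n n ℂ))
    (p : ↥M ⊗[ℂ] (↥M)ᵐᵒᵖ) (hp : p * p = p) :
    {z : ↥M ⊗[ℂ] (↥M)ᵐᵒᵖ | ∀ T ∈ LinearMap.range (PhiOp M p), PhiOp M z T = 0} =
        {z : ↥M ⊗[ℂ] (↥M)ᵐᵒᵖ | ∃ w, z = w * (1 - p)} ∧
      {z : ↥M ⊗[ℂ] (↥M)ᵐᵒᵖ | ∀ T ∈ LinearMap.ker (PhiOp M p), PhiOp M z T = 0} =
        {z : ↥M ⊗[ℂ] (↥M)ᵐᵒᵖ | ∃ w, z = w * p} := by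
  have hinj := M.mulLeftRight_injective (AlgHom.mulLeftRight_matrix_injective ℂ n)
  simp only [PhiOp_eq_mulLeftRight, AlgHom.toLinearMap_apply]
  exact ⟨setOf_forall_range_apply_eq_zero hinj hp, setOf_forall_ker_apply_eq_zero hinj hp⟩

set_option synthInstance.maxHeartbeats 1000000 in
set_option maxHeartbeats 2000000 in
/-- for an idempotent `p ∈ M ⊗ M^op` with `S := Im Φ_p` (so that
`B(H) = Im Φ_p ⊕ Ker Φ_p`), one has `Ann(S) = (M ⊗ M^op)(1 − p)` and
`Ann(Ker Φ_p) = (M ⊗ M^op) p`, where `Ann(X) = {z : Φ_z(X) = 0}`. -/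
theorem stmt_14 {n : Type*} [Fintype n] [DecidableEq n]
    (M : Subalgebra ℂ (Matrix n n ℂ)) (hMstar : ∀ a ∈ M, star a ∈ M)
    (p : ↥M ⊗[ℂ] (↥M)ᵐᵒᵖ) (hp : p * p = p) :
    {z : ↥M ⊗[ℂ] (↥M)ᵐᵒᵖ | ∀ T ∈ LinearMap.range (PhiOp M p), PhiOp M z T = 0} =
        {z : ↥M ⊗[ℂ] (↥M)ᵐᵒᵖ | ∃ w, z = w * (1 - p)} ∧
      {z : ↥M ⊗[ℂ] (↥M)ᵐᵒᵖ | ∀ T ∈ LinearMap.ker (PhiOp M p), PhiOp M z T = 0} =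
        {z : ↥M ⊗[ℂ] (↥M)ᵐᵒᵖ | ∃ w, z = w * p} :=
  stmt_14_general M p hp
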